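/- Let G be a graph on n vertices with maximum degree at most d, where d ≥ 1, let p ∈ [0,1], and let k ≥ 1 be an integer. Then the probability that the percolated random subgraph G_p contains a connected component of order at least k is at most n·(e·d·p)^{k−1}. -/

import Mathlib

open scoped Classical in
/-- The probability that the percolated random subgraph `G_p` satisfies property `A`. -/
noncomputable def percProb {V : Type} [Fintype V] (G : SimpleGraph V) (p : ℝ)
    (A : SimpleGraph V → Prop) : ℝ :=
  ∑ F ∈ G.edgeFinset.powerset,
    if A (SimpleGraph.fromEdgeSet (F : Set (Sym2 V))) then
      p ^ F.card * (1 - p) ^ (G.edgeFinset.card - F.card)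
    else 0

/-- The number of edges of `G` with exactly one endpoint in `S`. -/
noncomputable def edgeBoundary {V : Type} (G : SimpleGraph V) (S : Set V) : ℕ :=
  {e : Sym2 V | e ∈ G.edgeSet ∧ ∃ a b, e = s(a, b) ∧ a ∈ S ∧ b ∉ S}.ncard

/-!
A component of order at least `k` containing `v` can be explored greedily from `v` inside the
retained graph `H ≤ G`: a code `c = d * i + j` names the `j`-th `G`-neighbour of the `i`-th
explored vertex, and each step uses the least code leading along an `H`-edge to a new vertex.
These codes increase, so the first `k - 1` steps are recorded by a `(k - 1)`-subset of
`{0, …, d (k - 1) - 1}`, from which (together with `v`) the `k - 1` explored edges are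
reconstructed using `G` alone. Each of the `n * (d (k - 1)).choose (k - 1) ≤ n (e d) ^ (k - 1)`
reconstructed edge sets is retained with probability `p ^ (k - 1)`; a union bound concludes.
-/

open Finset

section Percolation

variable {V : Type} [Fintype V] {G : SimpleGraph V} {p : ℝ}

theorem percProb_le_sum (hp0 : 0 ≤ p) (hp1 : p ≤ 1) {A : SimpleGraph V → Prop} {ι : Type*}
    (Ω : Finset ι) (B : ι → SimpleGraph V → Prop)
    (hcover : ∀ H ≤ G, A H → ∃ i ∈ Ω, B i H) :
    percProb G p A ≤ ∑ i ∈ Ω, percProb G p (B i) := by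
  classical
  unfold percProb
  rw [sum_comm]
  refine sum_le_sum fun F hF => ?_
  have hw : 0 ≤ p ^ F.card * (1 - p) ^ (G.edgeFinset.card - F.card) := by
    have : 0 ≤ 1 - p := by linarith
    positivity
  have hle : SimpleGraph.fromEdgeSet (F : Set (Sym2 V)) ≤ G := by
    rw [SimpleGraph.fromEdgeSet_le]
    exact Set.sdiff_subset.trans (by simpa [← coe_subset] using mem_powerset.mp hF)
  split_ifs with hA
  · obtain ⟨i, hi, hB⟩ := hcover _ hle hA
    refine le_trans ?_ (single_le_sum (fun j _ => ?_) hi)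
    · simp only [if_pos hB, le_refl]
    · split_ifs <;> simp [hw]
  · exact sum_nonneg fun j _ => by split_ifs <;> simp [hw]

theorem percProb_subset_edgeSet {s : Finset (Sym2 V)} (hs : ↑s ⊆ G.edgeSet) :
    percProb G p (fun H => ↑s ⊆ H.edgeSet) = p ^ s.card := by
  classical
  have hs' : s ⊆ G.edgeFinset := by simpa [← Finset.coe_subset] using hs
  have hcond (F : Finset (Sym2 V)) :
      ↑s ⊆ (SimpleGraph.fromEdgeSet (F : Set (Sym2 V))).edgeSet ↔ s ⊆ F := by
    rw [SimpleGraph.edgeSet_fromEdgeSet, Set.subset_sdiff, coe_subset,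
      and_iff_left (Set.subset_compl_iff_disjoint_right.mp
        (hs.trans G.edgeSet_subset_compl_diagSet))]
  unfold percProb
  rw [sum_congr rfl fun F _ => if_congr (hcond F) rfl rfl, ← sum_filter]
  have hIcc : G.edgeFinset.powerset.filter (s ⊆ ·) = Icc s G.edgeFinset := by
    ext F; simp [and_comm]
  have hdisj {T : Finset (Sym2 V)} (hT : T ∈ (G.edgeFinset \ s).powerset) : Disjoint s T :=
    (subset_sdiff.mp (mem_powerset.mp hT)).2.symm
  rw [hIcc, Icc_eq_image_powerset hs', sum_image fun T hT T' hT' h => by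
    rw [← union_sdiff_cancel_left (hdisj hT), h, union_sdiff_cancel_left (hdisj hT')]]
  calc _ = ∑ T ∈ (G.edgeFinset \ s).powerset,
        p ^ s.card * (p ^ T.card * (1 - p) ^ ((G.edgeFinset \ s).card - T.card)) := by
        refine sum_congr rfl fun T hT => ?_
        rw [card_union_of_disjoint (hdisj hT), card_sdiff_of_subset hs', pow_add, Nat.sub_sub,
          mul_assoc]
    _ = p ^ s.card := by rw [← mul_sum, sum_pow_mul_eq_add_pow]; simp

theorem percProb_le_card_mul_pow (hp0 : 0 ≤ p) (hp1 : p ≤ 1) {A : SimpleGraph V → Prop}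
    {ι : Type*} (Ω : Finset ι) (s : ι → Finset (Sym2 V)) (m : ℕ)
    (hcover : ∀ H ≤ G, A H → ∃ i ∈ Ω, m ≤ (s i).card ∧ ↑(s i) ⊆ H.edgeSet) :
    percProb G p A ≤ Ω.card * p ^ m := by
  classical
  set Ω' := Ω.filter fun i => m ≤ (s i).card ∧ ↑(s i) ⊆ G.edgeSet
  calc percProb G p A ≤ ∑ i ∈ Ω', percProb G p (fun H => ↑(s i) ⊆ H.edgeSet) :=
        percProb_le_sum hp0 hp1 Ω' _ fun H hH hA => by
          obtain ⟨i, hi, hm, hsH⟩ := hcover H hH hA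
          have hsG := hsH.trans (SimpleGraph.edgeSet_subset_edgeSet.mpr hH)
          exact ⟨i, mem_filter.mpr ⟨hi, hm, hsG⟩, hsH⟩
    _ ≤ ∑ _i ∈ Ω', p ^ m := sum_le_sum fun i hi => by
          obtain ⟨-, hm, hsG⟩ := mem_filter.mp hi
          rw [percProb_subset_edgeSet hsG]
          exact pow_le_pow_of_le_one hp0 hp1 hm
    _ ≤ Ω.card * p ^ m := by
          rw [sum_const, nsmul_eq_mul]
          gcongr
          exact filter_subset _ _

end Percolation

theorem Nat.choose_mul_le_exp_mul_pow (d m : ℕ) :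
    ((d * m).choose m : ℝ) ≤ (Real.exp 1 * d) ^ m :=
  calc ((d * m).choose m : ℝ) ≤ ((d * m : ℕ) : ℝ) ^ m / m.factorial :=
        Nat.choose_le_pow_div m _
    _ = d ^ m * ((m : ℝ) ^ m / m.factorial) := by push_cast; ring
    _ ≤ d ^ m * Real.exp m := by gcongr; exact Real.pow_div_factorial_le_exp _ m.cast_nonneg m
    _ = (Real.exp 1 * d) ^ m := by rw [← Real.exp_one_pow]; ring

namespace SimpleGraph

variable {V : Type} [Finite V] (G : SimpleGraph V) (d : ℕ)

noncomputable def nbrList (u : V) : List V := (G.neighborSet u).toFinite.toFinset.toList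

noncomputable def codeTarget (us : List V) (c : ℕ) : Option (V × V) :=
  us[c / d]?.bind fun u => (G.nbrList u)[c % d]?.map fun w => (u, w)

noncomputable def exploreStep [DecidableEq V] (σ : List V × Finset (Sym2 V)) (c : ℕ) :
    List V × Finset (Sym2 V) :=
  match G.codeTarget d σ.1 c with
  | none => σ
  | some (u, w) => (σ.1 ++ [w], insert s(u, w) σ.2)

noncomputable def explore [DecidableEq V] (v : V) (W : Finset ℕ) : Finset (Sym2 V) :=
  ((W.sort (· ≤ ·)).foldl (G.exploreStep d) ([v], ∅)).2

def IsFreshCode (H : SimpleGraph V) (us : List V) (c : ℕ) : Prop :=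
  ∃ u w, G.codeTarget d us c = some (u, w) ∧ H.Adj u w ∧ w ∉ us

variable {G d}

lemma mem_nbrList {u w : V} : w ∈ G.nbrList u ↔ G.Adj u w := by simp [nbrList]

lemma length_nbrList (u : V) : (G.nbrList u).length = (G.neighborSet u).ncard := by
  rw [nbrList, Finset.length_toList, Set.ncard_eq_toFinset_card]

lemma codeTarget_eq_some {us : List V} {c : ℕ} {u w : V} :
    G.codeTarget d us c = some (u, w) ↔
      us[c / d]? = some u ∧ (G.nbrList u)[c % d]? = some w := by
  simp only [codeTarget, Option.bind_eq_some_iff, Option.map_eq_some_iff, Prod.mk.injEq]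
  constructor
  · rintro ⟨u', hu', w', hw', rfl, rfl⟩
    exact ⟨hu', hw'⟩
  · rintro ⟨hu, hw⟩
    exact ⟨u, hu, w, hw, rfl, rfl⟩

lemma lt_length_of_codeTarget_eq_some {us : List V} {c : ℕ} {u w : V}
    (h : G.codeTarget d us c = some (u, w)) : c / d < us.length :=
  (List.getElem?_eq_some_iff.mp (codeTarget_eq_some.mp h).1).1

lemma codeTarget_append {us : List V} {c : ℕ} (l : List V) (hc : c / d < us.length) :
    G.codeTarget d (us ++ l) c = G.codeTarget d us c := by
  simp [codeTarget, List.getElem?_append_left hc]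

lemma exploreStep_of_codeTarget_eq_some [DecidableEq V] {us : List V} {es : Finset (Sym2 V)}
    {c : ℕ} {u w : V} (h : G.codeTarget d us c = some (u, w)) :
    G.exploreStep d (us, es) c = (us ++ [w], insert s(u, w) es) := by
  simp [exploreStep, h]

lemma exists_isFreshCode (hdeg : ∀ u, (G.neighborSet u).ncard ≤ d) {H : SimpleGraph V}
    (hH : H ≤ G) {us : List V} {v : V} (hv : v ∈ us)
    (hlen : us.length < (H.connectedComponentMk v).supp.ncard) :
    ∃ c, G.IsFreshCode d H us c := by
  classical
  obtain ⟨x, hx, hxus⟩ := Set.exists_mem_notMem_of_ncard_lt_ncard (s := (us.toFinset : Set V))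
    ((Set.ncard_coe_finset _).trans_le us.toFinset_card_le |>.trans_lt hlen)
  obtain ⟨walk⟩ := (ConnectedComponent.exact ((ConnectedComponent.mem_supp_iff _ _).mp hx)).symm
  obtain ⟨dt, -, hu, hw⟩ := walk.exists_boundary_dart _ (by simpa using hv) hxus
  simp only [mem_coe, List.mem_toFinset] at hu hw
  obtain ⟨i, hi⟩ := List.mem_iff_getElem?.mp hu
  obtain ⟨j, hj⟩ := List.mem_iff_getElem?.mp (mem_nbrList.mpr (hH dt.adj))
  have hjd : j < d :=
    (List.getElem?_eq_some_iff.mp hj).1.trans_le ((length_nbrList _).trans_le (hdeg _))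
  refine ⟨d * i + j, dt.fst, dt.snd, codeTarget_eq_some.mpr ?_, dt.adj, hw⟩
  rw [Nat.mul_add_div (by omega), Nat.div_eq_of_lt hjd, add_zero, Nat.mul_add_mod,
    Nat.mod_eq_of_lt hjd]
  exact ⟨hi, hj⟩

lemma not_isFreshCode_append {H : SimpleGraph V} {us : List V} {c c' : ℕ} {u w : V}
    (hmin : ∀ c' < c, ¬ G.IsFreshCode d H us c') (hc : G.codeTarget d us c = some (u, w))
    (hc' : c' ≤ c) : ¬ G.IsFreshCode d H (us ++ [w]) c' := by
  rintro ⟨u', w', hc'w', huw', hw'⟩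
  rw [codeTarget_append _ ((Nat.div_le_div_right hc').trans_lt
    (lt_length_of_codeTarget_eq_some hc))] at hc'w'
  simp only [List.mem_append, List.mem_singleton, not_or] at hw'
  rcases hc'.lt_or_eq with hlt | rfl
  · exact hmin c' hlt ⟨u', w', hc'w', huw', hw'.1⟩
  · rw [hc] at hc'w'
    exact hw'.2 (Prod.ext_iff.mp (Option.some_inj.mp hc'w')).2.symm

variable (G d) in
structure Exploration [DecidableEq V] (H : SimpleGraph V) (v : V) (m : ℕ) where
  codes : List ℕ
  verts : List V
  edges : Finset (Sym2 V)
  codes_sorted : codes.Pairwise (· < ·)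
  length_codes : codes.length = m
  codes_lt : ∀ c ∈ codes, c < d * m
  length_verts : verts.length = m + 1
  mem_verts : v ∈ verts
  foldl_codes : codes.foldl (G.exploreStep d) ([v], ∅) = (verts, edges)
  card_edges : edges.card = m
  edges_subset : ↑edges ⊆ H.edgeSet
  mem_verts_of_mem_edges : ∀ e ∈ edges, ∀ a ∈ e, a ∈ verts
  -- the greedy invariant: the least fresh code exceeds every code used so far
  not_isFreshCode : ∀ c, (∃ c₀ ∈ codes, c ≤ c₀) → ¬ G.IsFreshCode d H verts c

namespace Exploration

variable [DecidableEq V] {H : SimpleGraph V} {v : V} {m : ℕ}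

def zero : Exploration G d H v 0 where
  codes := []
  verts := [v]
  edges := ∅
  codes_sorted := List.Pairwise.nil
  length_codes := rfl
  codes_lt := by simp
  length_verts := rfl
  mem_verts := List.mem_singleton_self v
  foldl_codes := rfl
  card_edges := rfl
  edges_subset := by simp
  mem_verts_of_mem_edges := by simp
  not_isFreshCode := by simp

lemma lt_of_isFreshCode (E : Exploration G d H v m) {c : ℕ} (hc : G.IsFreshCode d H E.verts c) :
    ∀ c₀ ∈ E.codes, c₀ < c :=
  fun c₀ hc₀ => lt_of_not_ge fun h => E.not_isFreshCode c ⟨c₀, hc₀, h⟩ hc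

theorem nonempty_succ (hdeg : ∀ u, (G.neighborSet u).ncard ≤ d) (hH : H ≤ G)
    (E : Exploration G d H v m) (hm : m + 1 < (H.connectedComponentMk v).supp.ncard) :
    Nonempty (Exploration G d H v (m + 1)) := by
  classical
  have hex := exists_isFreshCode hdeg hH E.mem_verts (E.length_verts ▸ hm)
  set c := Nat.find hex
  obtain ⟨u, w, hcw, huw, hw⟩ : G.IsFreshCode d H E.verts c := Nat.find_spec hex
  have hcd : c / d < m + 1 := E.length_verts ▸ lt_length_of_codeTarget_eq_some hcw
  have hd : 0 < d := by
    have := (List.getElem?_eq_some_iff.mp (codeTarget_eq_some.mp hcw).2).1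
    have := (length_nbrList u).trans_le (hdeg u)
    omega
  refine ⟨⟨E.codes ++ [c], E.verts ++ [w], insert s(u, w) E.edges, ?_, by simp [E.length_codes],
    ?_, by simp [E.length_verts], List.mem_append_left _ E.mem_verts, ?_, ?_, ?_, ?_, ?_⟩⟩
  · refine List.pairwise_append.mpr ⟨E.codes_sorted, List.pairwise_singleton _ _, ?_⟩
    rintro a ha b hb
    rw [List.mem_singleton.mp hb]
    exact E.lt_of_isFreshCode (Nat.find_spec hex) a ha
  · intro c' hc'
    rcases List.mem_append.mp hc' with hc' | hc'
    · exact (E.codes_lt c' hc').trans_le (Nat.mul_le_mul_left d m.le_succ)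
    · rw [List.mem_singleton.mp hc', mul_comm]
      exact (Nat.div_lt_iff_lt_mul hd).mp hcd
  · rw [List.foldl_append, E.foldl_codes, List.foldl_cons, List.foldl_nil,
      exploreStep_of_codeTarget_eq_some hcw]
  · have hnew : s(u, w) ∉ E.edges :=
      fun h => hw (E.mem_verts_of_mem_edges _ h w (Sym2.mem_mk_right u w))
    rw [card_insert_of_notMem hnew, E.card_edges]
  · rw [coe_insert, Set.insert_subset_iff]
    exact ⟨huw, E.edges_subset⟩
  · intro e he a ha
    rcases mem_insert.mp he with rfl | he
    · rcases Sym2.mem_iff.mp ha with rfl | rfl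
      · exact List.mem_append_left _ (List.mem_of_getElem? (codeTarget_eq_some.mp hcw).1)
      · exact List.mem_append_right _ (List.mem_singleton_self a)
    · exact List.mem_append_left _ (E.mem_verts_of_mem_edges e he a ha)
  · rintro c' ⟨c₀, hc₀, hle⟩
    refine not_isFreshCode_append (fun c' hc' => Nat.find_min hex hc') hcw (hle.trans ?_)
    rcases List.mem_append.mp hc₀ with hc₀ | hc₀
    · exact (E.lt_of_isFreshCode (Nat.find_spec hex) c₀ hc₀).le
    · exact (List.mem_singleton.mp hc₀).le

theorem nonempty (hdeg : ∀ u, (G.neighborSet u).ncard ≤ d) (hH : H ≤ G) :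
    ∀ m < (H.connectedComponentMk v).supp.ncard, Nonempty (Exploration G d H v m)
  | 0, _ => ⟨zero⟩
  | m + 1, hm =>
    let ⟨E⟩ := nonempty hdeg hH m (by omega)
    E.nonempty_succ hdeg hH hm

lemma explore_toFinset_codes (E : Exploration G d H v m) :
    G.explore d v E.codes.toFinset = E.edges := by
  rw [explore, (List.toFinset_sort _ E.codes_sorted.nodup).mpr (E.codes_sorted.imp le_of_lt),
    E.foldl_codes]

end Exploration

theorem exists_explore_card_eq [DecidableEq V] (hdeg : ∀ u, (G.neighborSet u).ncard ≤ d)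
    {H : SimpleGraph V} (hH : H ≤ G) {v : V} {m : ℕ}
    (hm : m < (H.connectedComponentMk v).supp.ncard) :
    ∃ W ∈ powersetCard m (range (d * m)),
      (G.explore d v W).card = m ∧ ↑(G.explore d v W) ⊆ H.edgeSet := by
  obtain ⟨E⟩ := Exploration.nonempty hdeg hH m hm
  refine ⟨E.codes.toFinset, mem_powersetCard.mpr ⟨fun c hc => ?_, ?_⟩, ?_⟩
  · exact mem_range.mpr (E.codes_lt c (List.mem_toFinset.mp hc))
  · rw [List.toFinset_card_of_nodup E.codes_sorted.nodup, E.length_codes]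
  · rw [E.explore_toFinset_codes]
    exact ⟨E.card_edges, E.edges_subset⟩

end SimpleGraph

theorem component_order_probability_bound_general (V : Type) [Fintype V] (G : SimpleGraph V)
    (d : ℕ)
    -- maximum degree at most `d`
    (hdeg : ∀ v : V, (G.neighborSet v).ncard ≤ d)
    (p : ℝ) (hp0 : 0 ≤ p) (hp1 : p ≤ 1) (k : ℕ) (hk : 1 ≤ k) :
    percProb G p (fun H => ∃ c : H.ConnectedComponent, k ≤ c.supp.ncard) ≤
      (Fintype.card V : ℝ) * (Real.exp 1 * (d : ℝ) * p) ^ (k - 1) := by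
  classical
  calc _ ≤ (univ ×ˢ powersetCard (k - 1) (range (d * (k - 1)))).card * p ^ (k - 1) := by
        refine percProb_le_card_mul_pow hp0 hp1 _ (fun i => G.explore d i.1 i.2) (k - 1) ?_
        rintro H hH ⟨c, hc⟩
        obtain ⟨v, rfl⟩ := c.exists_rep
        obtain ⟨W, hW, hcard, hsub⟩ :=
          G.exists_explore_card_eq hdeg hH (Nat.sub_one_lt_of_le hk hc)
        exact ⟨(v, W), mem_product.mpr ⟨mem_univ v, hW⟩, hcard.ge, hsub⟩
    _ ≤ Fintype.card V * ((Real.exp 1 * d) ^ (k - 1) * p ^ (k - 1)) := by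
        rw [card_product, card_univ, card_powersetCard, card_range, Nat.cast_mul, mul_assoc]
        gcongr
        exact Nat.choose_mul_le_exp_mul_pow d (k - 1)
    _ = _ := by ring

theorem component_order_probability_bound (V : Type) [Fintype V] (G : SimpleGraph V)
    (d : ℕ) (hd : 1 ≤ d)
    -- maximum degree at most `d`
    (hdeg : ∀ v : V, (G.neighborSet v).ncard ≤ d)
    (p : ℝ) (hp0 : 0 ≤ p) (hp1 : p ≤ 1) (k : ℕ) (hk : 1 ≤ k) :
    percProb G p (fun H => ∃ c : H.ConnectedComponent, k ≤ c.supp.ncard) ≤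
      (Fintype.card V : ℝ) * (Real.exp 1 * (d : ℝ) * p) ^ (k - 1) :=
  component_order_probability_bound_general V G d hdeg p hp0 hp1 k hk
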